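/- The limit as w → 0 of ( (-1)^p / 2 ) · ( (2π)^{2p} e^{2πw} A_{2p-1}(e^{2πw}) / ( (2p-1)! (1 - e^{2πw})^{2p} ) - 1/w^{2p} ) equals ζ(2p), for every integer p ≥ 1. -/

import Mathlib

open Complex Polynomial Filter

/-- The Eulerian polynomials, defined by the recurrence
`A 0 = 1`, `A (n+1) = (1 + n*X) * A n + X*(1-X) * (A n)'`. -/
noncomputable def eulerianPoly : ℕ → Polynomial ℤ
  | 0 => 1
  | n + 1 => (1 + Polynomial.C (n : ℤ) * Polynomial.X) * eulerianPoly n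
      + Polynomial.X * (1 - Polynomial.X) * Polynomial.derivative (eulerianPoly n)

/-- The Eulerian numbers `E(n,k)`, coefficients of the Eulerian polynomials. -/
noncomputable def eulerianNum (n k : ℕ) : ℤ := (eulerianPoly n).coeff k

open Finset Set
open scoped Nat Topology

/-!
Put `K = dslope bernoulliGenFun 0`, i.e. `K(x) = 1/(eˣ - 1) - 1/x`. Since
`x/(eˣ - 1) · (eˣ - 1)/x = 1`, the Leibniz rule at `0` turns the Taylor coefficients of
`x/(eˣ - 1)` into a solution of the recurrence defining the Bernoulli numbers, so
`K⁽ⁿ⁾(0) = Bₙ₊₁/(n + 1)`. Away from `0`, `K = -1 - eˣ/(1 - eˣ) - 1/x`, and the recurrence of the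
Eulerian polynomials says exactly that the `n`-th derivative of `eˣ/(1 - eˣ)` is
`eˣ Aₙ(eˣ)/(1 - eˣ)ⁿ⁺¹`. Hence the bracket in the statement is `-(2π)²ᵖ/(2p-1)! · K⁽²ᵖ⁻¹⁾(2πw)`,
which tends to `-(2π)²ᵖ B₂ₚ/(2p)!`, and Euler's formula for `ζ(2p)` finishes the proof.
-/

theorem AnalyticOnNhd.dslope {𝕜 E : Type*} [NontriviallyNormedField 𝕜] [NormedAddCommGroup E]
    [NormedSpace 𝕜 E] {f : 𝕜 → E} {s : Set 𝕜} {a : 𝕜} (hf : AnalyticOnNhd 𝕜 f s) :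
    AnalyticOnNhd 𝕜 (dslope f a) s := by
  intro x hx
  rcases eq_or_ne x a with rfl | hxa
  · obtain ⟨p, hp⟩ := hf x hx
    exact ⟨p.fslope, hp.has_fpower_series_dslope_fslope⟩
  · refine (((analyticAt_id.sub analyticAt_const).inv (sub_ne_zero.2 hxa)).smul
      ((hf x hx).sub (analyticAt_const (v := f a)))).congr ?_
    filter_upwards [isOpen_ne.eventually_mem hxa] with y hy
    rw [dslope_of_ne _ hy, slope_def_module]
    rfl

theorem iteratedDeriv_succ_zero_eq_mul_iteratedDeriv_dslope {𝕜 : Type*} [NontriviallyNormedField 𝕜]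
    {f : 𝕜 → 𝕜} {n : ℕ} (h : ContDiffAt 𝕜 (n + 1) (dslope f 0) 0) :
    iteratedDeriv (n + 1) f 0 = (n + 1) * iteratedDeriv n (dslope f 0) 0 := by
  have hf : f = fun x => f 0 + x * dslope f 0 x := funext fun x => by
    simpa [eq_sub_iff_add_eq', eq_comm] using sub_smul_dslope f 0 x
  calc iteratedDeriv (n + 1) f 0
      = iteratedDeriv (n + 1) (fun x => f 0 + x * dslope f 0 x) 0 := by rw [← hf]
    _ = (n + 1) * iteratedDeriv n (dslope f 0) 0 := by
      rw [iteratedDeriv_const_add n.succ_pos,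
        iteratedDeriv_fun_mul contDiffAt_id (by exact_mod_cast h),
        sum_eq_single 1 (fun i _ hi => by simp [iteratedDeriv_fun_id_zero, hi]) (by simp)]
      simp [iteratedDeriv_fun_id_zero]

theorem iteratedDeriv_eqOn_of_hasDerivAt {𝕜 E : Type*} [NontriviallyNormedField 𝕜]
    [NormedAddCommGroup E] [NormedSpace 𝕜 E] {F : ℕ → 𝕜 → E} {s : Set 𝕜} (hs : IsOpen s)
    (hF : ∀ n, ∀ x ∈ s, HasDerivAt (F n) (F (n + 1) x) x) (n : ℕ) :
    EqOn (iteratedDeriv n (F 0)) (F n) s := by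
  induction n with
  | zero => intro x _; simp
  | succ n ih =>
    intro x hx
    rw [iteratedDeriv_succ, (ih.eventuallyEq_of_mem (hs.mem_nhds hx)).deriv_eq]
    exact (hF n x hx).deriv

theorem eq_of_sum_choose_div_mul_eq {a b : ℕ → ℝ}
    (h : ∀ n, ∑ k ∈ range (n + 1), n.choose k / ((n - k : ℕ) + 1 : ℝ) * a k
      = ∑ k ∈ range (n + 1), n.choose k / ((n - k : ℕ) + 1 : ℝ) * b k) : a = b := by
  funext n
  induction n using Nat.strong_induction_on with
  | _ n ih =>
    have hn := h n
    rw [sum_range_succ, sum_range_succ,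
      sum_congr rfl fun k hk => by rw [ih k (mem_range.1 hk)]] at hn
    simpa using hn

/-- `x / (eˣ - 1)`, with its limit `1` at `0` supplied by `dslope`. -/
noncomputable def bernoulliGenFun : ℝ → ℝ := fun x => (dslope Real.exp 0 x)⁻¹

theorem dslope_exp_ne_zero (x : ℝ) : dslope Real.exp 0 x ≠ 0 := by
  rcases eq_or_ne x 0 with rfl | hx
  · simp [dslope_same]
  · rw [dslope_of_ne _ hx, slope_def_field]
    exact div_ne_zero (by simpa [sub_eq_zero] using hx) (by simpa using hx)

theorem analyticOnNhd_dslope_exp : AnalyticOnNhd ℝ (dslope Real.exp 0) univ :=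
  analyticOnNhd_rexp.dslope

theorem iteratedDeriv_dslope_exp_zero (n : ℕ) :
    iteratedDeriv n (dslope Real.exp 0) 0 = 1 / (n + 1) := by
  have h := iteratedDeriv_succ_zero_eq_mul_iteratedDeriv_dslope (n := n)
    (analyticOnNhd_dslope_exp.contDiff.contDiffAt)
  rw [iteratedDeriv_eq_iterate, Real.iter_deriv_exp, Real.exp_zero] at h
  field_simp
  linarith

theorem analyticOnNhd_bernoulliGenFun : AnalyticOnNhd ℝ bernoulliGenFun univ :=
  fun x _ => (analyticOnNhd_dslope_exp x trivial).inv (dslope_exp_ne_zero x)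

theorem sum_choose_div_mul_iteratedDeriv_bernoulliGenFun (n : ℕ) :
    ∑ k ∈ range (n + 1), n.choose k / ((n - k : ℕ) + 1 : ℝ) * iteratedDeriv k bernoulliGenFun 0
      = if n = 0 then 1 else 0 := by
  have h : (fun x => bernoulliGenFun x * dslope Real.exp 0 x) = fun _ => 1 :=
    funext fun x => inv_mul_cancel₀ (dslope_exp_ne_zero x)
  have hleibniz := iteratedDeriv_fun_mul (n := n) (x := 0)
    analyticOnNhd_bernoulliGenFun.contDiff.contDiffAt analyticOnNhd_dslope_exp.contDiff.contDiffAt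
  rw [h, iteratedDeriv_const] at hleibniz
  rw [hleibniz]
  refine sum_congr rfl fun k _ => ?_
  rw [iteratedDeriv_dslope_exp_zero]
  ring

theorem sum_choose_div_mul_bernoulli (n : ℕ) :
    ∑ k ∈ range (n + 1), n.choose k / ((n - k : ℕ) + 1 : ℝ) * _root_.bernoulli k
      = if n = 0 then 1 else 0 := by
  have h : ∑ k ∈ range (n + 1), (n.choose k / ((n - k : ℕ) + 1) * _root_.bernoulli k : ℚ)
      = if n = 0 then 1 else 0 := by
    rw [← bernoulli_spec' n, Nat.sum_antidiagonal_eq_sum_range_succ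
      (fun i j => ((i + j).choose j : ℚ) / (j + 1) * _root_.bernoulli i)]
    refine sum_congr rfl fun k hk => ?_
    rw [Nat.add_sub_cancel' (mem_range_succ_iff.1 hk), Nat.choose_symm (mem_range_succ_iff.1 hk)]
  have h := congrArg (Rat.cast : ℚ → ℝ) h
  push_cast at h
  rw [h]
  split_ifs <;> simp

theorem iteratedDeriv_bernoulliGenFun_zero (n : ℕ) :
    iteratedDeriv n bernoulliGenFun 0 = _root_.bernoulli n := by
  have := eq_of_sum_choose_div_mul_eq (a := fun k => iteratedDeriv k bernoulliGenFun 0)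
    (b := fun k => (_root_.bernoulli k : ℝ)) fun n => by
      rw [sum_choose_div_mul_iteratedDeriv_bernoulliGenFun, sum_choose_div_mul_bernoulli]
  exact congrFun this n

noncomputable def eulerianFrac (n : ℕ) (x : ℝ) : ℝ :=
  Real.exp x * aeval (Real.exp x) (eulerianPoly n) / (1 - Real.exp x) ^ (n + 1)

theorem one_sub_exp_ne_zero {x : ℝ} (hx : x ≠ 0) : 1 - Real.exp x ≠ 0 := by
  rwa [sub_ne_zero, ne_comm, Ne, Real.exp_eq_one_iff]

theorem hasDerivAt_eulerianFrac (n : ℕ) {x : ℝ} (hx : x ≠ 0) :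
    HasDerivAt (eulerianFrac n) (eulerianFrac (n + 1) x) x := by
  have hE := Real.hasDerivAt_exp x
  have h1 := one_sub_exp_ne_zero hx
  refine ((hE.fun_mul ((Polynomial.hasDerivAt_aeval (eulerianPoly n) _).comp x hE)).fun_div
    (((hasDerivAt_const x 1).fun_sub hE).fun_pow (n + 1)) (pow_ne_zero _ h1)).congr_deriv ?_
  simp only [eulerianFrac, eulerianPoly, map_add, map_mul, map_one, map_sub, aeval_X, map_natCast,
    Function.comp_apply, Nat.add_sub_cancel]
  field_simp
  push_cast
  ring

theorem hasDerivAt_neg_one_pow_mul_factorial_div_pow (n : ℕ) {x : ℝ} (hx : x ≠ 0) :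
    HasDerivAt (fun y : ℝ => (-1) ^ n * n ! / y ^ (n + 1))
      ((-1) ^ (n + 1) * (n + 1)! / x ^ (n + 2)) x := by
  refine (((hasDerivAt_pow (n + 1) x).inv (pow_ne_zero _ hx)).const_mul
    ((-1 : ℝ) ^ n * n !)).congr_deriv ?_
  push_cast [Nat.factorial_succ]
  field_simp
  ring

theorem analyticOnNhd_dslope_bernoulliGenFun :
    AnalyticOnNhd ℝ (dslope bernoulliGenFun 0) univ :=
  analyticOnNhd_bernoulliGenFun.dslope

theorem iteratedDeriv_dslope_bernoulliGenFun_zero (n : ℕ) :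
    iteratedDeriv n (dslope bernoulliGenFun 0) 0 = _root_.bernoulli (n + 1) / (n + 1) := by
  have h := iteratedDeriv_succ_zero_eq_mul_iteratedDeriv_dslope (n := n)
    analyticOnNhd_dslope_bernoulliGenFun.contDiff.contDiffAt
  rw [iteratedDeriv_bernoulliGenFun_zero] at h
  rw [h]
  field_simp

theorem dslope_bernoulliGenFun_of_ne_zero {x : ℝ} (hx : x ≠ 0) :
    dslope bernoulliGenFun 0 x = -1 - (eulerianFrac 0 x + 1 / x) := by
  have h1 : Real.exp x - 1 ≠ 0 := by rwa [sub_ne_zero, Ne, Real.exp_eq_one_iff]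
  have h2 := one_sub_exp_ne_zero hx
  simp only [dslope_of_ne _ hx, slope_def_field, bernoulliGenFun, dslope_same, Real.deriv_exp,
    Real.exp_zero, eulerianFrac, eulerianPoly, map_one]
  field_simp
  ring

theorem iteratedDeriv_dslope_bernoulliGenFun {n : ℕ} (hn : 0 < n) {x : ℝ} (hx : x ≠ 0) :
    iteratedDeriv n (dslope bernoulliGenFun 0) x
      = -(eulerianFrac n x + (-1) ^ n * n ! / x ^ (n + 1)) := by
  have hF := iteratedDeriv_eqOn_of_hasDerivAt
    (F := fun n x => eulerianFrac n x + (-1) ^ n * n ! / x ^ (n + 1)) isOpen_ne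
    (fun n _ hx => (hasDerivAt_eulerianFrac n hx).add
      (hasDerivAt_neg_one_pow_mul_factorial_div_pow n hx)) n hx
  have hK : EqOn (dslope bernoulliGenFun 0) (fun x => -1 - (eulerianFrac 0 x + 1 / x)) {0}ᶜ :=
    fun x hx => dslope_bernoulliGenFun_of_ne_zero hx
  rw [hK.iteratedDeriv_of_isOpen isOpen_compl_singleton n hx, iteratedDeriv_const_sub hn,
    iteratedDeriv_neg]
  simpa using congrArg Neg.neg hF

theorem tendsto_eulerianFrac_add_neg_one_pow_mul_factorial_div_pow {n : ℕ} (hn : 0 < n) :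
    Tendsto (fun x => eulerianFrac n x + (-1) ^ n * n ! / x ^ (n + 1)) (𝓝[≠] 0)
      (𝓝 (-(_root_.bernoulli (n + 1) / (n + 1)))) := by
  have hcont := (analyticOnNhd_dslope_bernoulliGenFun.contDiff (n := n)).continuous_iteratedDeriv' n
  have h := (hcont.tendsto 0).neg.mono_left (nhdsWithin_le_nhds (s := {0}ᶜ))
  rw [iteratedDeriv_dslope_bernoulliGenFun_zero] at h
  refine h.congr' (eventually_nhdsWithin_of_forall fun x hx => ?_)
  rw [iteratedDeriv_dslope_bernoulliGenFun hn hx, neg_neg]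

theorem limit_even_case_eq_zeta (p : ℕ) (hp : 1 ≤ p) :
    Filter.Tendsto
      (fun w : ℝ =>
        ((((-1 : ℝ) ^ p / 2) *
            ((2 * Real.pi) ^ (2 * p) * Real.exp (2 * Real.pi * w) *
                Polynomial.aeval (Real.exp (2 * Real.pi * w)) (eulerianPoly (2 * p - 1)) /
                ((Nat.factorial (2 * p - 1) : ℝ) * (1 - Real.exp (2 * Real.pi * w)) ^ (2 * p))
              - 1 / w ^ (2 * p)) : ℝ) : ℂ))
      (nhdsWithin 0 {0}ᶜ) (nhds (riemannZeta (2 * p))) := by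
  obtain ⟨m, hm⟩ : ∃ m, 2 * p = m + 1 := ⟨2 * p - 1, by omega⟩
  have hm_odd : Odd m := ⟨p - 1, by omega⟩
  have hπ : 2 * Real.pi ≠ 0 := by positivity
  have hscale : Tendsto (fun w : ℝ => 2 * Real.pi * w) (𝓝[≠] 0) (𝓝[≠] 0) :=
    tendsto_nhdsWithin_of_tendsto_nhds_of_eventually_within _
      (((continuous_const_mul _).tendsto' 0 0 (mul_zero _)).mono_left nhdsWithin_le_nhds)
      (eventually_nhdsWithin_of_forall fun w hw => mul_ne_zero hπ hw)
  have hlim := ((tendsto_eulerianFrac_add_neg_one_pow_mul_factorial_div_pow (n := m)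
    (by omega)).comp hscale).const_mul ((-1) ^ p / 2 * (2 * Real.pi) ^ (m + 1) / m !)
  rw [show 2 * p - 1 = m by omega, hm]
  convert (hlim.congr' (eventually_nhdsWithin_of_forall fun w hw => ?_)).ofReal using 2
  · rw [riemannZeta_two_mul_nat (by omega), hm, Nat.add_sub_cancel, Nat.factorial_succ]
    push_cast
    field_simp
    ring
  · have hw : w ≠ 0 := hw
    have h1 := one_sub_exp_ne_zero (mul_ne_zero hπ hw)
    have hpi := Real.pi_ne_zero
    simp only [Function.comp_apply, eulerianFrac, hm_odd.neg_one_pow]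
    field_simp
    ring
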